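/- Assume 0 < p_s, p_s^e < 1 and 0 < p_α ≤ 1. Then ρ is a stationary probability distribution of the age-pair chain: (i) ρ(i,j) ≥ 0 for all (i,j) ∈ ℕ×ℕ; (ii) ∑_{(i,j)∈ℕ×ℕ} ρ(i,j) = 1 (the sum converges); and (iii) ρ satisfies the balance equations ρ(0,0) = λ11, ρ(0, j+1) = λ10 · ∑_{i∈ℕ} ρ(i,j) for every j ∈ ℕ, ρ(i+1, 0) = λ01 · ∑_{j∈ℕ} ρ(i,j) for every i ∈ ℕ, and ρ(i+1, j+1) = λ00 · ρ(i,j) for all i, j ∈ ℕ. -/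

import Mathlib

noncomputable section

/-- λ11 = p_α p_s p_s^e -/
def l11 (ps pse pa : ℝ) : ℝ := pa * ps * pse
/-- λ10 = p_α p_s (1 − p_s^e) -/
def l10 (ps pse pa : ℝ) : ℝ := pa * ps * (1 - pse)
/-- λ01 = p_α (1 − p_s) p_s^e -/
def l01 (ps pse pa : ℝ) : ℝ := pa * (1 - ps) * pse
/-- λ00 = p_α (1 − p_s)(1 − p_s^e) + (1 − p_α) -/
def l00 (ps pse pa : ℝ) : ℝ := pa * (1 - ps) * (1 - pse) + (1 - pa)
/-- P_A = λ11 + λ10 -/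
def PA (ps pse pa : ℝ) : ℝ := l11 ps pse pa + l10 ps pse pa
/-- P_B = λ11 + λ01 -/
def PB (ps pse pa : ℝ) : ℝ := l11 ps pse pa + l01 ps pse pa

/-- Stationary distribution ρ of the joint age process on ℕ×ℕ. -/
def rho (ps pse pa : ℝ) : ℕ × ℕ → ℝ := fun ij =>
  if ij.1 = ij.2 then l11 ps pse pa * l00 ps pse pa ^ ij.1
  else if ij.1 < ij.2 then
    l10 ps pse pa * PB ps pse pa * (1 - PB ps pse pa) ^ (ij.2 - ij.1 - 1) *
      l00 ps pse pa ^ ij.1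
  else
    l01 ps pse pa * PA ps pse pa * (1 - PA ps pse pa) ^ (ij.1 - ij.2 - 1) *
      l00 ps pse pa ^ ij.2

/-!
Each coordinate of the chain is the age of a renewal process: the first is reset with
probability `P_A`, the second with probability `P_B`. Accordingly the marginals of `ρ` are
geometric, `∑ᵢ ρ(i,j) = (1 - P_B)^j P_B` and `∑ⱼ ρ(i,j) = (1 - P_A)^i P_A`, and all balance
equations follow from these closed forms. For the first marginal, the entries below the diagonal
form a geometric tail of total mass `λ01 λ00^j`, while those above it telescope through
`(1 - P_B) - λ00 = λ10`. The second marginal follows by exchanging the roles of `p_s` and `p_s^e`,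
which transposes `ρ`.
-/

open Finset

section AgePair

variable {ps pse pa : ℝ}

lemma PA_eq : PA ps pse pa = pa * ps := by
  simp only [PA, l11, l10]; ring

lemma PB_eq : PB ps pse pa = pa * pse := by
  simp only [PB, l11, l01]; ring

lemma PA_swap : PA pse ps pa = PB ps pse pa := by
  rw [PA_eq, PB_eq]

lemma PB_swap : PB pse ps pa = PA ps pse pa := by
  rw [PA_eq, PB_eq]

lemma one_sub_PB_sub_l00 : 1 - PB ps pse pa - l00 ps pse pa = l10 ps pse pa := by
  simp only [PB, l11, l01, l00, l10]; ring

lemma rho_diag (i : ℕ) : rho ps pse pa (i, i) = l11 ps pse pa * l00 ps pse pa ^ i := by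
  simp [rho]

lemma rho_of_lt {i j : ℕ} (h : i < j) :
    rho ps pse pa (i, j) =
      l10 ps pse pa * PB ps pse pa * (1 - PB ps pse pa) ^ (j - i - 1) * l00 ps pse pa ^ i := by
  simp [rho, h.ne, h]

lemma rho_of_gt {i j : ℕ} (h : j < i) :
    rho ps pse pa (i, j) =
      l01 ps pse pa * PA ps pse pa * (1 - PA ps pse pa) ^ (i - j - 1) * l00 ps pse pa ^ j := by
  simp [rho, h.ne', h.not_gt]

lemma rho_swap (i j : ℕ) : rho ps pse pa (i, j) = rho pse ps pa (j, i) := by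
  rcases lt_trichotomy i j with h | rfl | h
  · rw [rho_of_lt h, rho_of_gt h, PA_swap]
    simp only [l10, l01, l00]; ring
  · simp only [rho_diag, l11, l00]; ring
  · rw [rho_of_gt h, rho_of_lt h, PB_swap]
    simp only [l10, l01, l00]; ring

lemma rho_succ_succ (i j : ℕ) :
    rho ps pse pa (i + 1, j + 1) = l00 ps pse pa * rho ps pse pa (i, j) := by
  rcases lt_trichotomy i j with h | rfl | h
  · rw [rho_of_lt h, rho_of_lt (by omega), show j + 1 - (i + 1) = j - i by omega]; ring
  · rw [rho_diag, rho_diag]; ring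
  · rw [rho_of_gt h, rho_of_gt (by omega), show i + 1 - (j + 1) = i - j by omega]; ring

lemma rho_zero_succ (j : ℕ) :
    rho ps pse pa (0, j + 1) = l10 ps pse pa * ((1 - PB ps pse pa) ^ j * PB ps pse pa) := by
  rw [rho_of_lt (by omega : 0 < j + 1), Nat.sub_zero, Nat.add_sub_cancel, pow_zero]; ring

lemma rho_succ_zero (i : ℕ) :
    rho ps pse pa (i + 1, 0) = l01 ps pse pa * ((1 - PA ps pse pa) ^ i * PA ps pse pa) := by
  rw [rho_of_gt (by omega : 0 < i + 1), Nat.sub_zero, Nat.add_sub_cancel, pow_zero]; ring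

lemma rho_nonneg (hs0 : 0 ≤ ps) (hs1 : ps ≤ 1) (he0 : 0 ≤ pse) (he1 : pse ≤ 1)
    (ha0 : 0 ≤ pa) (ha1 : pa ≤ 1) (ij : ℕ × ℕ) : 0 ≤ rho ps pse pa ij := by
  have : 0 ≤ 1 - ps := sub_nonneg.2 hs1
  have : 0 ≤ 1 - pse := sub_nonneg.2 he1
  have : 0 ≤ 1 - pa := sub_nonneg.2 ha1
  have : 0 ≤ 1 - pa * ps := sub_nonneg.2 (mul_le_one₀ ha1 hs0 hs1)
  have : 0 ≤ 1 - pa * pse := sub_nonneg.2 (mul_le_one₀ ha1 he0 he1)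
  unfold rho
  simp only [l11, l10, l01, l00, PA_eq, PB_eq]
  split_ifs <;> positivity

lemma hasSum_geometric_weights {p : ℝ} (hp0 : 0 < p) (hp1 : p ≤ 1) :
    HasSum (fun n : ℕ => (1 - p) ^ n * p) 1 :=
  ProbabilityTheory.hasSum_one_geometricMeasure (p := ⟨p, hp0.le, hp1⟩)
    fun h => hp0.ne' (congrArg Subtype.val h)

lemma hasSum_rho_add_succ (hA0 : 0 < PA ps pse pa) (hA1 : PA ps pse pa ≤ 1) (j : ℕ) :
    HasSum (fun n => rho ps pse pa (n + (j + 1), j)) (l01 ps pse pa * l00 ps pse pa ^ j) := by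
  have hterm : (fun n => rho ps pse pa (n + (j + 1), j)) =
      fun n => l01 ps pse pa * l00 ps pse pa ^ j * ((1 - PA ps pse pa) ^ n * PA ps pse pa) := by
    funext n
    rw [rho_of_gt (by omega), show n + (j + 1) - j - 1 = n by omega]; ring
  rw [hterm]
  simpa only [mul_one] using
    (hasSum_geometric_weights hA0 hA1).mul_left (l01 ps pse pa * l00 ps pse pa ^ j)

lemma sum_range_succ_rho (j : ℕ) :
    ∑ i ∈ range (j + 1), rho ps pse pa (i, j) =
      (1 - PB ps pse pa) ^ j * PB ps pse pa - l01 ps pse pa * l00 ps pse pa ^ j := by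
  have geom := geom_sum₂_mul (1 - PB ps pse pa) (l00 ps pse pa) j
  rw [one_sub_PB_sub_l00, geom_sum₂_comm] at geom
  have hoff : ∑ i ∈ range j, rho ps pse pa (i, j) =
      PB ps pse pa * ((1 - PB ps pse pa) ^ j - l00 ps pse pa ^ j) := by
    rw [← geom, sum_mul, mul_sum]
    refine sum_congr rfl fun i hi => ?_
    rw [rho_of_lt (mem_range.1 hi), show j - i - 1 = j - 1 - i by omega]; ring
  rw [sum_range_succ, hoff, rho_diag, PB]; ring

lemma hasSum_rho_fst (hA0 : 0 < PA ps pse pa) (hA1 : PA ps pse pa ≤ 1) (j : ℕ) :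
    HasSum (fun i => rho ps pse pa (i, j)) ((1 - PB ps pse pa) ^ j * PB ps pse pa) := by
  refine (hasSum_nat_add_iff' (j + 1)).1 ?_
  rw [sum_range_succ_rho, sub_sub_cancel]
  exact hasSum_rho_add_succ hA0 hA1 j

lemma hasSum_rho_snd (hB0 : 0 < PB ps pse pa) (hB1 : PB ps pse pa ≤ 1) (i : ℕ) :
    HasSum (fun j => rho ps pse pa (i, j)) ((1 - PA ps pse pa) ^ i * PA ps pse pa) := by
  simp_rw [rho_swap (ps := ps), ← PB_swap]
  exact hasSum_rho_fst (PA_swap ▸ hB0) (PA_swap ▸ hB1) i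

lemma hasSum_rho (hnn : ∀ ij, 0 ≤ rho ps pse pa ij) (hA0 : 0 < PA ps pse pa)
    (hA1 : PA ps pse pa ≤ 1) (hB0 : 0 < PB ps pse pa) (hB1 : PB ps pse pa ≤ 1) :
    HasSum (rho ps pse pa) 1 := by
  have hrows := hasSum_rho_snd hB0 hB1
  have hgeom := hasSum_geometric_weights hA0 hA1
  have hsum : Summable (rho ps pse pa) := by
    refine (summable_prod_of_nonneg hnn).2 ⟨fun i => (hrows i).summable, ?_⟩
    simpa only [(hrows _).tsum_eq] using hgeom.summable
  exact hgeom.unique (hsum.hasSum.prod_fiberwise hrows) ▸ hsum.hasSum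

end AgePair

theorem stmt11 (ps pse pa : ℝ)
    (hs0 : 0 < ps) (hs1 : ps < 1) (he0 : 0 < pse) (he1 : pse < 1)
    (ha0 : 0 < pa) (ha1 : pa ≤ 1) :
    (∀ ij : ℕ × ℕ, 0 ≤ rho ps pse pa ij) ∧
    HasSum (rho ps pse pa) 1 ∧
    (rho ps pse pa (0, 0) = l11 ps pse pa ∧
     (∀ j : ℕ, Summable (fun i => rho ps pse pa (i, j)) ∧
        rho ps pse pa (0, j + 1) = l10 ps pse pa * ∑' i, rho ps pse pa (i, j)) ∧
     (∀ i : ℕ, Summable (fun j => rho ps pse pa (i, j)) ∧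
        rho ps pse pa (i + 1, 0) = l01 ps pse pa * ∑' j, rho ps pse pa (i, j)) ∧
     (∀ i j : ℕ, rho ps pse pa (i + 1, j + 1) = l00 ps pse pa * rho ps pse pa (i, j))) := by
  have hA0 : 0 < PA ps pse pa := PA_eq ▸ mul_pos ha0 hs0
  have hA1 : PA ps pse pa ≤ 1 := PA_eq ▸ mul_le_one₀ ha1 hs0.le hs1.le
  have hB0 : 0 < PB ps pse pa := PB_eq ▸ mul_pos ha0 he0
  have hB1 : PB ps pse pa ≤ 1 := PB_eq ▸ mul_le_one₀ ha1 he0.le he1.le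
  have hnn := rho_nonneg hs0.le hs1.le he0.le he1.le ha0.le ha1
  have hcols := hasSum_rho_fst hA0 hA1
  have hrows := hasSum_rho_snd hB0 hB1
  refine ⟨hnn, hasSum_rho hnn hA0 hA1 hB0 hB1, by simpa using rho_diag 0,
    fun j => ⟨(hcols j).summable, ?_⟩, fun i => ⟨(hrows i).summable, ?_⟩, rho_succ_succ⟩
  · rw [(hcols j).tsum_eq, rho_zero_succ]
  · rw [(hrows i).tsum_eq, rho_succ_zero]
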